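/- arXiv:2601.14629 — 3 statements merged into one kernel-verified Lean document; each statement's English description precedes it below -/
import Mathlib

section
/- Consider the LP: maximize ρᵀχ subject to Γχ = β − β̃, χ ≥ 0. Suppose the unperturbed LP (with β̃ = 0) has unique optimal solution χ* with support I of cardinality k and Γ_I invertible. If 2·Γ_I⁻¹β̃ ≤ χ*_I componentwise and the perturbed LP is feasible, then the perturbed LP has a unique optimal solution χ̃* given by χ̃*_I = χ*_I − Γ_I⁻¹β̃ on coordinates in I and χ̃*_i = 0 for i ∉ I; in particular the perturbed LP has the same optimal basis I. -/
lemma exists_t_aux {d : ℕ} (χs w : Fin d → ℝ) (h0 : ∀ i, 0 ≤ χs i)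
    (hw : ∀ i, χs i = 0 → 0 ≤ w i) :
    ∃ t : ℝ, 0 < t ∧ ∀ i, 0 ≤ χs i + t * w i := by
  classical
  set f : Fin d → ℝ := fun i => if w i < 0 then χs i / (-w i) else 1 with hf
  set S : Finset ℝ := insert (1:ℝ) (Finset.univ.image f) with hS
  have hne : S.Nonempty := ⟨1, by simp [hS]⟩
  set t := S.min' hne with ht
  have hfpos : ∀ i, 0 < f i := by
    intro i
    by_cases h : w i < 0
    · have hχ : 0 < χs i := by
        rcases lt_or_eq_of_le (h0 i) with h' | h'
        · exact h'
        · exact absurd (hw i h'.symm) (not_le.mpr h)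
      simp only [hf, if_pos h]
      exact div_pos hχ (by linarith)
    · simp [hf, h]
  have htpos : 0 < t := by
    have := S.min'_mem hne
    rw [← ht] at this
    simp only [hS, Finset.mem_insert, Finset.mem_image] at this
    rcases this with h | ⟨i, _, h⟩
    · rw [h]; norm_num
    · rw [← h]; exact hfpos i
  refine ⟨t, htpos, fun i => ?_⟩
  have htle : t ≤ f i := S.min'_le _ (by simp [hS, Finset.mem_image])
  by_cases h : w i < 0
  · rw [hf] at htle; simp only [if_pos h] at htle
    have : t * (-w i) ≤ χs i := (le_div_iff₀ (by linarith)).mp htle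
    nlinarith
  · push_neg at h
    have : 0 ≤ t * w i := mul_nonneg htpos.le h
    have := h0 i; linarith


/-- Perturbed-LP stability: if the unperturbed standard-form LP is non-degenerate
(unique optimum `χ*`, support `I` of size `k`, `Γ_I` invertible), the perturbation
satisfies `2·Γ_I⁻¹β̃ ≤ χ*_I` and the perturbed LP is feasible, then the perturbed
LP has the unique optimal solution `χ* − y` (where `y` is the extension by zero of
`Γ_I⁻¹β̃`), with the same optimal basis `I`. -/
theorem stmt3
    {k d : ℕ} (ρ : Fin d → ℝ) (Γ : Fin k → Fin d → ℝ) (β βt : Fin k → ℝ)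
    (χs : Fin d → ℝ)
    (hfeas : (∀ i, 0 ≤ χs i) ∧ (∀ j, ∑ i, Γ j i * χs i = β j))
    (hopt : ∀ χ : Fin d → ℝ, (∀ i, 0 ≤ χ i) → (∀ j, ∑ i, Γ j i * χ i = β j) →
      ∑ i, ρ i * χ i ≤ ∑ i, ρ i * χs i)
    (huniq : ∀ χ : Fin d → ℝ, (∀ i, 0 ≤ χ i) → (∀ j, ∑ i, Γ j i * χ i = β j) →
      (∑ i, ρ i * χ i = ∑ i, ρ i * χs i) → χ = χs)
    (hcard : Set.ncard {i : Fin d | 0 < χs i} = k)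
    -- invertibility of `Γ_I`: injectivity on vectors supported on `I`
    (hinj : ∀ z : Fin d → ℝ, (∀ i, ¬ 0 < χs i → z i = 0) →
      (∀ j, ∑ i, Γ j i * z i = 0) → z = 0)
    -- `y` is the extension by zero of `Γ_I⁻¹β̃`
    (y : Fin d → ℝ)
    (hy_supp : ∀ i, ¬ 0 < χs i → y i = 0)
    (hy_eq : ∀ j, ∑ i, Γ j i * y i = βt j)
    -- smallness: `2·Γ_I⁻¹β̃ ≤ χ*_I` componentwise
    (hy_small : ∀ i, 0 < χs i → 2 * y i ≤ χs i)
    -- the perturbed LP is feasible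
    (hfeas' : ∃ χ : Fin d → ℝ, (∀ i, 0 ≤ χ i) ∧ (∀ j, ∑ i, Γ j i * χ i = β j - βt j)) :
    ((∀ i, 0 ≤ χs i - y i) ∧ (∀ j, ∑ i, Γ j i * (χs i - y i) = β j - βt j)) ∧
    (∀ χ : Fin d → ℝ, (∀ i, 0 ≤ χ i) → (∀ j, ∑ i, Γ j i * χ i = β j - βt j) →
      ∑ i, ρ i * χ i ≤ ∑ i, ρ i * (χs i - y i)) ∧
    (∀ χ : Fin d → ℝ, (∀ i, 0 ≤ χ i) → (∀ j, ∑ i, Γ j i * χ i = β j - βt j) →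
      (∑ i, ρ i * χ i = ∑ i, ρ i * (χs i - y i)) → χ = fun i => χs i - y i) ∧
    (∀ i, 0 < χs i - y i ↔ 0 < χs i) := by
  obtain ⟨hpos, heq⟩ := hfeas
  have hy0 : ∀ i, ¬ 0 < χs i → χs i = 0 := fun i h =>
    le_antisymm (not_lt.mp h) (hpos i)
  have hA1 : ∀ i, 0 ≤ χs i - y i := by
    intro i
    by_cases h : 0 < χs i
    · have := hy_small i h; linarith
    · rw [hy_supp i h, hy0 i h]; norm_num
  have hA2 : ∀ j, ∑ i, Γ j i * (χs i - y i) = β j - βt j := by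
    intro j
    simp only [mul_sub, Finset.sum_sub_distrib, heq j, hy_eq j]
  -- key construction
  have key : ∀ χ : Fin d → ℝ, (∀ i, 0 ≤ χ i) → (∀ j, ∑ i, Γ j i * χ i = β j - βt j) →
      ∃ t : ℝ, 0 < t ∧
        (∀ i, 0 ≤ χs i + t * (χ i - (χs i - y i))) ∧
        (∀ j, ∑ i, Γ j i * (χs i + t * (χ i - (χs i - y i))) = β j) ∧
        (∑ i, ρ i * (χs i + t * (χ i - (χs i - y i))) =
          ∑ i, ρ i * χs i + t * (∑ i, ρ i * χ i - ∑ i, ρ i * (χs i - y i))) := by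
    intro χ hχ0 hχeq
    set w : Fin d → ℝ := fun i => χ i - (χs i - y i) with hw
    obtain ⟨t, htpos, htnn⟩ := exists_t_aux χs w hpos (by
      intro i hχs
      have hns : ¬ 0 < χs i := by rw [hχs]; exact lt_irrefl 0
      simp only [hw]
      rw [hχs, hy_supp i hns]
      simpa using hχ0 i)
    refine ⟨t, htpos, htnn, ?_, ?_⟩
    · intro j
      have : ∑ i, Γ j i * w i = 0 := by
        simp only [hw, mul_sub, Finset.sum_sub_distrib, hχeq j, hA2 j]
        rw [heq j, hy_eq j]; ring
      calc ∑ i, Γ j i * (χs i + t * w i)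
          = ∑ i, Γ j i * χs i + t * ∑ i, Γ j i * w i := by
            rw [Finset.mul_sum, ← Finset.sum_add_distrib]
            congr 1; ext i; ring
        _ = β j := by rw [this, heq j]; ring
    · have hsum : ∑ i, ρ i * w i = ∑ i, ρ i * χ i - ∑ i, ρ i * (χs i - y i) := by
        simp only [hw, mul_sub, Finset.sum_sub_distrib]
      calc ∑ i, ρ i * (χs i + t * w i)
          = ∑ i, ρ i * χs i + t * ∑ i, ρ i * w i := by
            rw [Finset.mul_sum, ← Finset.sum_add_distrib]
            congr 1; ext i; ring
        _ = _ := by rw [hsum]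
  refine ⟨⟨hA1, hA2⟩, ?_, ?_, ?_⟩
  · intro χ hχ0 hχeq
    obtain ⟨t, htpos, h1, h2, h3⟩ := key χ hχ0 hχeq
    have := hopt _ h1 h2
    rw [h3] at this
    nlinarith
  · intro χ hχ0 hχeq hobj
    obtain ⟨t, htpos, h1, h2, h3⟩ := key χ hχ0 hχeq
    have heqobj : ∑ i, ρ i * (χs i + t * (χ i - (χs i - y i))) = ∑ i, ρ i * χs i := by
      rw [h3, hobj]; ring
    have := huniq _ h1 h2 heqobj
    funext i
    have hi := congrFun this i
    have : t * (χ i - (χs i - y i)) = 0 := by linarith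
    have := (mul_eq_zero.mp this).resolve_left (ne_of_gt htpos)

    linarith
  · intro i
    constructor
    · intro h
      by_contra hn
      rw [hy_supp i hn, hy0 i hn] at h
      norm_num at h
    · intro h
      have := hy_small i h
      linarith
end

section
/- Let p* be an optimal dual price vector, i.e., p* minimizes f(p) = ⟨p, B⟩ + E_{(r,a,b)~P}[(r − ⟨a,p⟩)⁺] over p ≥ 0, where B = E[b]. Then the expected hindsight optimal reward of T i.i.d. samples from P satisfies E[R*] ≤ T·f(p*), where R* is the optimal value of the offline LP: maximize Σₜ rₜxₜ subject to prefix inventory constraints Σ_{k≤t} a_{jk}x_k ≤ Σ_{k≤t} b_{jk} for all j, t and xₜ ∈ {0,1}. -/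
open MeasureTheory ProbabilityTheory

theorem aux_point {m T : ℕ} (rω : Fin T → ℝ) (aω bω : Fin T → Fin m → ℝ)
    (p : Fin m → ℝ) (hp : ∀ j, 0 ≤ p j) (x : Fin T → ℝ)
    (hx : ∀ t, x t = 0 ∨ x t = 1)
    (hfeas : ∀ j, ∑ t, aω t j * x t ≤ ∑ t, bω t j) :
    ∑ t, rω t * x t ≤
      ∑ t, ((∑ j, p j * bω t j) + max (rω t - ∑ j, aω t j * p j) 0) := by
  have h1 : ∀ t ∈ Finset.univ, rω t * x t ≤
      max (rω t - ∑ j, aω t j * p j) 0 + (∑ j, aω t j * p j) * x t := by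
    intro t _
    rcases hx t with h | h
    · simp [h]
    · have := le_max_left (rω t - ∑ j, aω t j * p j) (0:ℝ)
      simp only [h, mul_one]
      linarith
  calc ∑ t, rω t * x t
      ≤ ∑ t, (max (rω t - ∑ j, aω t j * p j) 0 + (∑ j, aω t j * p j) * x t) :=
        Finset.sum_le_sum h1
    _ = (∑ t, max (rω t - ∑ j, aω t j * p j) 0) + ∑ j, p j * ∑ t, aω t j * x t := by
        rw [Finset.sum_add_distrib]
        congr 1
        simp only [Finset.sum_mul, Finset.mul_sum]
        rw [Finset.sum_comm]
        apply Finset.sum_congr rfl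
        intro j _
        apply Finset.sum_congr rfl
        intro t _
        ring
    _ ≤ (∑ t, max (rω t - ∑ j, aω t j * p j) 0) + ∑ j, p j * ∑ t, bω t j := by
        have : ∀ j ∈ Finset.univ, p j * ∑ t, aω t j * x t ≤ p j * ∑ t, bω t j :=
          fun j _ => mul_le_mul_of_nonneg_left (hfeas j) (hp j)
        exact add_le_add (le_refl _) (Finset.sum_le_sum this)
    _ = ∑ t, ((∑ j, p j * bω t j) + max (rω t - ∑ j, aω t j * p j) 0) := by
        rw [Finset.sum_add_distrib]
        rw [add_comm]
        congr 1
        simp only [Finset.mul_sum]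
        rw [Finset.sum_comm]

theorem aux_xbd {m : ℕ} (pstar : Fin m → ℝ) (abar rbar : ℝ)
    (z : ℝ × (Fin m → ℝ) × (Fin m → ℝ))
    (hr : |z.1| < rbar) (ha : (∑ j, (z.2.1 j) ^ 2) < abar ^ 2) :
    ‖max (z.1 - ∑ j, z.2.1 j * pstar j) 0‖ ≤ rbar + ∑ j, |abar| * |pstar j| := by
  have haj : ∀ j, |z.2.1 j| ≤ |abar| := by
    intro j
    have h3 : (z.2.1 j)^2 ≤ ∑ i, (z.2.1 i)^2 :=
      Finset.single_le_sum (f := fun i => (z.2.1 i)^2) (fun i _ => sq_nonneg _)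
        (Finset.mem_univ j)
    nlinarith [abs_nonneg (z.2.1 j), abs_nonneg abar, sq_abs (z.2.1 j), sq_abs abar]
  have hip : |∑ j, z.2.1 j * pstar j| ≤ ∑ j, |abar| * |pstar j| := by
    calc |∑ j, z.2.1 j * pstar j| ≤ ∑ j, |z.2.1 j * pstar j| := Finset.abs_sum_le_sum_abs _ _
      _ ≤ ∑ j, |abar| * |pstar j| := Finset.sum_le_sum fun j _ => by
          rw [abs_mul]
          exact mul_le_mul_of_nonneg_right (haj j) (abs_nonneg _)
  have h2 : (0:ℝ) ≤ max (z.1 - ∑ j, z.2.1 j * pstar j) 0 := le_max_right _ _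
  rw [Real.norm_eq_abs, abs_of_nonneg h2]
  have hr' := abs_lt.mp hr
  have hip' := abs_le.mp hip
  have hrb : (0:ℝ) ≤ rbar := le_trans (abs_nonneg _) hr.le
  have hsp : (0:ℝ) ≤ ∑ j, |abar| * |pstar j| :=
    Finset.sum_nonneg fun j _ => mul_nonneg (abs_nonneg _) (abs_nonneg _)
  apply max_le _ (by linarith)
  linarith

/-- The expected hindsight optimal reward of `T` i.i.d. samples from a bounded
distribution `P` satisfies `E[R*] ≤ T·f(p*)`, where `p*` minimizes the dual
function `f(p) = ⟨p, B⟩ + E[(r − ⟨a, p⟩)⁺]` over `p ≥ 0` with `B = E[b]`, and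
`R*` is the optimal value of the offline integer program with prefix inventory
constraints. -/
theorem stmt7
    {m T : ℕ} {Ω : Type*} [MeasurableSpace Ω] (μ : Measure Ω) [IsProbabilityMeasure μ]
    (P : Measure (ℝ × (Fin m → ℝ) × (Fin m → ℝ))) [IsProbabilityMeasure P]
    (r : Fin T → Ω → ℝ) (a b : Fin T → Ω → Fin m → ℝ)
    (hmeas : ∀ t, Measurable (fun ω => (r t ω, a t ω, b t ω)))
    (hident : ∀ t, μ.map (fun ω => (r t ω, a t ω, b t ω)) = P)
    (hindep : iIndepFun (fun t ω => (r t ω, a t ω, b t ω)) μ)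
    (rbar abar bbar : ℝ)
    (hP_bdd : ∀ᵐ z ∂P, |z.1| < rbar ∧ (∑ j, (z.2.1 j) ^ 2) < abar ^ 2 ∧
      (∀ j, 0 ≤ z.2.2 j ∧ z.2.2 j < bbar))
    (pstar : Fin m → ℝ) (hpstar : ∀ j, 0 ≤ pstar j)
    (hmin : ∀ p : Fin m → ℝ, (∀ j, 0 ≤ p j) →
      ((∑ j, pstar j * ∫ z, z.2.2 j ∂P) +
          ∫ z, max (z.1 - ∑ j, z.2.1 j * pstar j) 0 ∂P) ≤
      ((∑ j, p j * ∫ z, z.2.2 j ∂P) +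
          ∫ z, max (z.1 - ∑ j, z.2.1 j * p j) 0 ∂P))
    (Rstar : Ω → ℝ)
    (hRstar : ∀ᵐ ω ∂μ, IsGreatest {v : ℝ | ∃ x : Fin T → ℝ,
        (∀ t, x t = 0 ∨ x t = 1) ∧
        (∀ (j : Fin m) (t : Fin T),
          ∑ k ∈ Finset.Iic t, a k ω j * x k ≤ ∑ k ∈ Finset.Iic t, b k ω j) ∧
        v = ∑ t, r t ω * x t} (Rstar ω)) :
    ∫ ω, Rstar ω ∂μ ≤ (T : ℝ) *
      ((∑ j, pstar j * ∫ z, z.2.2 j ∂P) +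
        ∫ z, max (z.1 - ∑ j, z.2.1 j * pstar j) 0 ∂P) := by
  -- notation
  set φb : Fin m → (ℝ × (Fin m → ℝ) × (Fin m → ℝ)) → ℝ := fun j z => z.2.2 j with hφb
  set φx : (ℝ × (Fin m → ℝ) × (Fin m → ℝ)) → ℝ :=
    fun z => max (z.1 - ∑ j, z.2.1 j * pstar j) 0 with hφx
  have hφbm : ∀ j, Measurable (φb j) := fun j =>
    (measurable_pi_apply j).comp (measurable_snd.comp measurable_snd)
  have hφxm : Measurable φx := by
    apply Measurable.max _ measurable_const
    apply Measurable.sub measurable_fst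
    exact Finset.measurable_sum _ fun j _ =>
      ((measurable_pi_apply j).comp (measurable_fst.comp measurable_snd)).mul measurable_const
  -- a.e. bounds under P, transferred to μ
  have habd : ∀ t, ∀ᵐ ω ∂μ, |r t ω| < rbar ∧ (∑ j, (a t ω j) ^ 2) < abar ^ 2 ∧
      (∀ j, 0 ≤ b t ω j ∧ b t ω j < bbar) := by
    intro t
    have := hP_bdd
    rw [← hident t] at this
    exact ae_of_ae_map (hmeas t).aemeasurable this
  -- the dual value
  set f : ℝ := (∑ j, pstar j * ∫ z, φb j z ∂P) + ∫ z, φx z ∂P with hf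
  -- φ combined
  set φ : (ℝ × (Fin m → ℝ) × (Fin m → ℝ)) → ℝ :=
    fun z => (∑ j, pstar j * φb j z) + φx z with hφ
  have hφm : Measurable φ :=
    (Finset.measurable_sum _ fun j _ => (hφbm j).const_mul _).add hφxm
  -- bound constant
  set C : ℝ := (∑ j, pstar j * bbar) + (rbar + ∑ j, |abar| * |pstar j|) with hC
  have hφbound : ∀ z : ℝ × (Fin m → ℝ) × (Fin m → ℝ),
      (|z.1| < rbar ∧ (∑ j, (z.2.1 j) ^ 2) < abar ^ 2 ∧
        (∀ j, 0 ≤ z.2.2 j ∧ z.2.2 j < bbar)) → ‖φ z‖ ≤ C := by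
    rintro z ⟨hr, ha, hb⟩
    have hφzeq : φ z = (∑ j, pstar j * φb j z) + φx z := rfl
    have h1 : 0 ≤ ∑ j, pstar j * φb j z :=
      Finset.sum_nonneg fun j _ => mul_nonneg (hpstar j) (hb j).1
    have h2 : (0:ℝ) ≤ φx z := le_max_right _ _
    have hb1 : ∑ j, pstar j * φb j z ≤ ∑ j, pstar j * bbar :=
      Finset.sum_le_sum fun j _ => mul_le_mul_of_nonneg_left (hb j).2.le (hpstar j)
    have hx2 := aux_xbd pstar abar rbar z hr ha
    rw [Real.norm_eq_abs] at hx2 ⊢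
    have h2' : |φx z| = φx z := abs_of_nonneg h2
    rw [hφzeq, abs_of_nonneg (by linarith), hC]
    rw [h2'] at hx2
    linarith
  -- integrability of φ wrt P
  have hφint : Integrable φ P := by
    refine Integrable.mono' (integrable_const C) hφm.aestronglyMeasurable ?_
    filter_upwards [hP_bdd] with z hz using hφbound z hz
  have hφbint : ∀ j, Integrable (φb j) P := by
    intro j
    refine Integrable.mono' (integrable_const bbar) (hφbm j).aestronglyMeasurable ?_
    filter_upwards [hP_bdd] with z hz
    rw [Real.norm_eq_abs, abs_of_nonneg (hz.2.2 j).1]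
    exact (hz.2.2 j).2.le
  have hφxint : Integrable φx P := by
    refine Integrable.mono' (integrable_const (rbar + ∑ j, |abar| * |pstar j|))
      hφxm.aestronglyMeasurable ?_
    filter_upwards [hP_bdd] with z hz
    exact aux_xbd pstar abar rbar z hz.1 hz.2.1
  -- ∫ φ dP = f
  have hintφ : ∫ z, φ z ∂P = f := by
    rw [hφ, hf]
    simp only
    rw [integral_add (by exact (integrable_finset_sum _ fun j _ => (hφbint j).const_mul _)) hφxint,
      integral_finset_sum _ (fun j _ => (hφbint j).const_mul _)]
    congr 1
    exact Finset.sum_congr rfl fun j _ => integral_const_mul _ _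
  -- integrability and integral value of φ ∘ F t
  have hcomp_int : ∀ t, Integrable (fun ω => φ (r t ω, a t ω, b t ω)) μ := by
    intro t
    have := hφint
    rw [← hident t] at this
    exact (integrable_map_measure hφm.aestronglyMeasurable (hmeas t).aemeasurable).mp this
  have hcomp_eq : ∀ t, ∫ ω, φ (r t ω, a t ω, b t ω) ∂μ = f := by
    intro t
    rw [← hintφ, ← hident t,
      integral_map (hmeas t).aemeasurable hφm.aestronglyMeasurable]
  -- pointwise bound
  have hpt : ∀ᵐ ω ∂μ, Rstar ω ≤ ∑ t, φ (r t ω, a t ω, b t ω) := by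
    filter_upwards [hRstar, ae_all_iff.mpr habd] with ω hω hbd
    obtain ⟨⟨x, hx, hfeas, hval⟩, -⟩ := hω
    rw [hval]
    have hterm : ∀ j, ∑ t, a t ω j * x t ≤ ∑ t, b t ω j := by
      intro j
      rcases Nat.eq_zero_or_pos T with hT | hT
      · subst hT; simp
      · have hlast := hfeas j ⟨T - 1, by omega⟩
        have huniv : Finset.Iic (⟨T - 1, by omega⟩ : Fin T) = Finset.univ := by
          apply Finset.eq_univ_iff_forall.mpr
          intro k
          rw [Finset.mem_Iic, Fin.le_def]
          have := k.isLt
          simp only []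
          omega
        rwa [huniv] at hlast
    exact aux_point (fun t => r t ω) (fun t => a t ω) (fun t => b t ω) pstar hpstar x hx hterm
  -- conclude
  have hfnonneg : 0 ≤ f := by
    rw [hf]
    have h1 : ∀ j, 0 ≤ ∫ z, φb j z ∂P := fun j =>
      integral_nonneg_of_ae (by filter_upwards [hP_bdd] with z hz using (hz.2.2 j).1)
    have h2 : 0 ≤ ∫ z, φx z ∂P := integral_nonneg fun z => le_max_right _ _
    have := Finset.sum_nonneg (fun j (_ : j ∈ Finset.univ) => mul_nonneg (hpstar j) (h1 j))
    linarith
  by_cases hRint : Integrable Rstar μ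
  · calc ∫ ω, Rstar ω ∂μ ≤ ∫ ω, ∑ t, φ (r t ω, a t ω, b t ω) ∂μ :=
        integral_mono_ae hRint (integrable_finset_sum _ fun t _ => hcomp_int t) hpt
      _ = ∑ t, ∫ ω, φ (r t ω, a t ω, b t ω) ∂μ :=
        integral_finset_sum _ fun t _ => hcomp_int t
      _ = ∑ _t : Fin T, f := Finset.sum_congr rfl fun t _ => hcomp_eq t
      _ = (T : ℝ) * f := by simp [mul_comm]
  · rw [integral_undef hRint]
    positivity
end

section
/- Suppose P is non-degenerate with smoothness parameter μ, meaning |Pr(r > ⟨a, p'⟩ | a) − Pr(r > ⟨a, p*⟩ | a)| ≤ μ·|⟨a, p'⟩ − ⟨a, p*⟩| for all admissible p'. If ‖a‖₂ ≤ ā almost surely, then g(p*) − g(p') ≤ μ·ā²·‖p' − p*‖₂², where g(p') = E[r·𝟙(r > ⟨a,p'⟩) + ⟨b − a·𝟙(r > ⟨a,p'⟩), p*⟩]. -/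
open MeasureTheory

private lemma stmt13_core {Ω : Type*} [inst : MeasurableSpace Ω] (μ : Measure Ω)
    [IsProbabilityMeasure μ]
    {mm : MeasurableSpace Ω} (hm : mm ≤ inst)
    (r s1 s2 : Ω → ℝ) (hr : Measurable[inst] r) (hs1 : Measurable[inst] s1)
    (hs2 : Measurable[inst] s2)
    (hs1m : Measurable[mm] s1) (hs2m : Measurable[mm] s2)
    (C : ℝ) (hC : ∀ᵐ ω ∂μ, |s2 ω - s1 ω| ≤ C)
    (smooth : ℝ)
    (hsm : ∀ᵐ ω ∂μ,
      |(μ[(fun ω' => if s2 ω' < r ω' then (1:ℝ) else 0)|mm]) ω -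
        (μ[(fun ω' => if s1 ω' < r ω' then (1:ℝ) else 0)|mm]) ω| ≤
          smooth * |s2 ω - s1 ω|) :
    ∫ ω, (r ω - s1 ω) *
        ((if s1 ω < r ω then (1:ℝ) else 0) - (if s2 ω < r ω then (1:ℝ) else 0)) ∂μ
      ≤ smooth * ∫ ω, (s2 ω - s1 ω) ^ 2 ∂μ := by
  classical
  haveI : IsFiniteMeasure (μ.trim hm) := isFiniteMeasure_trim hm
  set i1 : Ω → ℝ := fun ω => if s1 ω < r ω then 1 else 0 with hi1def
  set i2 : Ω → ℝ := fun ω => if s2 ω < r ω then 1 else 0 with hi2def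
  have hi1meas : Measurable[inst] i1 :=
    Measurable.ite (measurableSet_lt hs1 hr) measurable_const measurable_const
  have hi2meas : Measurable[inst] i2 :=
    Measurable.ite (measurableSet_lt hs2 hr) measurable_const measurable_const
  have hb1 : ∀ ω, |i1 ω| ≤ 1 := by
    intro ω; simp only [hi1def]; split <;> norm_num
  have hb2 : ∀ ω, |i2 ω| ≤ 1 := by
    intro ω; simp only [hi2def]; split <;> norm_num
  have hi1int : Integrable i1 μ := by
    refine Integrable.mono' (integrable_const 1) hi1meas.aestronglyMeasurable ?_
    exact Filter.Eventually.of_forall fun ω => by rw [Real.norm_eq_abs]; exact hb1 ω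
  have hi2int : Integrable i2 μ := by
    refine Integrable.mono' (integrable_const 1) hi2meas.aestronglyMeasurable ?_
    exact Filter.Eventually.of_forall fun ω => by rw [Real.norm_eq_abs]; exact hb2 ω
  -- pointwise facts
  have hpt : ∀ ω, (r ω - s1 ω) * (i1 ω - i2 ω) ≤ (s2 ω - s1 ω) * (i1 ω - i2 ω) := by
    intro ω
    simp only [hi1def, hi2def]
    split_ifs with h1 h2 h2 <;> (try push_neg at *) <;> nlinarith
  have hptXabs : ∀ ω, |(r ω - s1 ω) * (i1 ω - i2 ω)| ≤ |s2 ω - s1 ω| := by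
    intro ω
    have h3 := le_abs_self (s2 ω - s1 ω)
    have h4 := neg_abs_le (s2 ω - s1 ω)
    simp only [hi1def, hi2def]
    split_ifs with h1 h2 h2 <;> (try push_neg at *) <;> rw [abs_le] <;>
      constructor <;> nlinarith
  have hptYabs : ∀ ω, |(s2 ω - s1 ω) * (i1 ω - i2 ω)| ≤ |s2 ω - s1 ω| := by
    intro ω
    have h3 := le_abs_self (s2 ω - s1 ω)
    have h4 := neg_abs_le (s2 ω - s1 ω)
    simp only [hi1def, hi2def]
    split_ifs with h1 h2 h2 <;> (try push_neg at *) <;> rw [abs_le] <;>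
      constructor <;> nlinarith
  -- integrabilities
  have hXint : Integrable (fun ω => (r ω - s1 ω) * (i1 ω - i2 ω)) μ := by
    refine Integrable.mono' (integrable_const C)
      (((hr.sub hs1).mul (hi1meas.sub hi2meas)).aestronglyMeasurable) ?_
    filter_upwards [hC] with ω h
    rw [Real.norm_eq_abs]
    exact le_trans (hptXabs ω) h
  have hYint : Integrable ((fun ω => s2 ω - s1 ω) * (i1 - i2)) μ := by
    refine Integrable.mono' (integrable_const C)
      (((hs2.sub hs1).mul (hi1meas.sub hi2meas)).aestronglyMeasurable) ?_
    filter_upwards [hC] with ω h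
    rw [Real.norm_eq_abs]
    exact le_trans (hptYabs ω) h
  have hgint : Integrable (i1 - i2) μ := hi1int.sub hi2int
  have hfm : StronglyMeasurable[mm] (fun ω => s2 ω - s1 ω) :=
    (hs2m.sub hs1m).stronglyMeasurable
  have hmulcond : Integrable (fun ω => (s2 ω - s1 ω) * (μ[(i1 - i2)|mm]) ω) μ := by
    refine Integrable.bdd_mul (c := C) integrable_condExp (hs2.sub hs1).aestronglyMeasurable ?_
    filter_upwards [hC] with ω h
    rwa [Real.norm_eq_abs]
  have hsqint : Integrable (fun ω => smooth * (s2 ω - s1 ω) ^ 2) μ := by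
    refine Integrable.const_mul ?_ smooth
    refine Integrable.mono' (integrable_const (C ^ 2))
      (((hs2.sub hs1).pow_const 2).aestronglyMeasurable) ?_
    filter_upwards [hC] with ω h
    rw [Real.norm_eq_abs, abs_pow]
    have := abs_nonneg (s2 ω - s1 ω)
    nlinarith
  have hcondsub := condExp_sub (μ := μ) (m := mm) hi1int hi2int
  calc ∫ ω, (r ω - s1 ω) * (i1 ω - i2 ω) ∂μ
      ≤ ∫ ω, ((fun ω => s2 ω - s1 ω) * (i1 - i2)) ω ∂μ :=
        integral_mono hXint hYint hpt
    _ = ∫ ω, (μ[(fun ω => s2 ω - s1 ω) * (i1 - i2)|mm]) ω ∂μ :=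
        (integral_condExp hm).symm
    _ = ∫ ω, (s2 ω - s1 ω) * (μ[(i1 - i2)|mm]) ω ∂μ := by
        refine integral_congr_ae ?_
        filter_upwards [condExp_mul_of_stronglyMeasurable_left hfm hYint hgint] with ω h
        simpa using h
    _ ≤ ∫ ω, smooth * (s2 ω - s1 ω) ^ 2 ∂μ := by
        refine integral_mono_ae hmulcond hsqint ?_
        filter_upwards [hsm, hcondsub] with ω h1 h2
        have h2' : (μ[(i1 - i2)|mm]) ω = (μ[i1|mm]) ω - (μ[i2|mm]) ω := by
          rw [h2]; rfl
        rw [h2']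
        have hd : |(μ[i1|mm]) ω - (μ[i2|mm]) ω| ≤ smooth * |s2 ω - s1 ω| := by
          rw [abs_sub_comm]; exact h1
        have h3 : (s2 ω - s1 ω) * ((μ[i1|mm]) ω - (μ[i2|mm]) ω)
            ≤ |s2 ω - s1 ω| * |(μ[i1|mm]) ω - (μ[i2|mm]) ω| := by
          calc (s2 ω - s1 ω) * ((μ[i1|mm]) ω - (μ[i2|mm]) ω)
              ≤ |(s2 ω - s1 ω) * ((μ[i1|mm]) ω - (μ[i2|mm]) ω)| := le_abs_self _
            _ = |s2 ω - s1 ω| * |(μ[i1|mm]) ω - (μ[i2|mm]) ω| := abs_mul _ _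
        have h4 : |s2 ω - s1 ω| * |(μ[i1|mm]) ω - (μ[i2|mm]) ω|
            ≤ |s2 ω - s1 ω| * (smooth * |s2 ω - s1 ω|) :=
          mul_le_mul_of_nonneg_left hd (abs_nonneg _)
        have h5 : |s2 ω - s1 ω| * (smooth * |s2 ω - s1 ω|) = smooth * (s2 ω - s1 ω) ^ 2 := by
          rw [← sq_abs]; ring
        linarith
    _ = smooth * ∫ ω, (s2 ω - s1 ω) ^ 2 ∂μ := integral_const_mul smooth _

/-- Under the smoothness (non-degeneracy) condition
`|Pr(r > ⟨a, p'⟩ | a) − Pr(r > ⟨a, p*⟩ | a)| ≤ μ·|⟨a, p'⟩ − ⟨a, p*⟩|` and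
`‖a‖₂ ≤ ā` a.s., we have `g(p*) − g(p') ≤ μ·ā²·‖p' − p*‖₂²`. -/
theorem stmt13
    {m : ℕ} {Ω : Type*} [inst : MeasurableSpace Ω] (μ : Measure Ω) [IsProbabilityMeasure μ]
    (r : Ω → ℝ) (a b : Ω → Fin m → ℝ)
    (hr_meas : Measurable r) (ha_meas : Measurable a) (hb_meas : Measurable b)
    (rbar abar bbar smooth : ℝ) (habar : 0 < abar) (hsmooth : 0 < smooth)
    (hbdd : ∀ᵐ ω ∂μ, |r ω| ≤ rbar ∧ (∑ j, (a ω j) ^ 2) ≤ abar ^ 2 ∧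
      (∀ j, |b ω j| ≤ bbar))
    (pstar : Fin m → ℝ) (hps : ∀ j, 0 ≤ pstar j)
    (hmin : ∀ p : Fin m → ℝ, (∀ j, 0 ≤ p j) →
      ((∑ j, pstar j * ∫ ω, b ω j ∂μ) +
          ∫ ω, max (r ω - ∑ j, a ω j * pstar j) 0 ∂μ) ≤
      ((∑ j, p j * ∫ ω, b ω j ∂μ) +
          ∫ ω, max (r ω - ∑ j, a ω j * p j) 0 ∂μ))
    (p' : Fin m → ℝ) (hp' : ∀ j, 0 ≤ p' j)
    -- smoothness: conditionally on `a`, the acceptance probabilities at `p'`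
    -- and `p*` differ by at most `smooth·|⟨a, p'⟩ − ⟨a, p*⟩|`
    (hsm : ∀ᵐ ω ∂μ,
      |(MeasureTheory.condExp (MeasurableSpace.comap a inferInstance) μ
          (fun ω' => (if (∑ j, a ω' j * p' j) < r ω' then (1:ℝ) else 0))) ω -
        (MeasureTheory.condExp (MeasurableSpace.comap a inferInstance) μ
          (fun ω' => (if (∑ j, a ω' j * pstar j) < r ω' then (1:ℝ) else 0))) ω| ≤
      smooth * |(∑ j, a ω j * p' j) - ∑ j, a ω j * pstar j|) :
    (∫ ω, (r ω * (if (∑ j, a ω j * pstar j) < r ω then (1:ℝ) else 0) +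
        ∑ j, (b ω j - a ω j *
          (if (∑ j', a ω j' * pstar j') < r ω then (1:ℝ) else 0)) * pstar j) ∂μ) -
      (∫ ω, (r ω * (if (∑ j, a ω j * p' j) < r ω then (1:ℝ) else 0) +
        ∑ j, (b ω j - a ω j *
          (if (∑ j', a ω j' * p' j') < r ω then (1:ℝ) else 0)) * pstar j) ∂μ) ≤
      smooth * abar ^ 2 * ∑ j, (p' j - pstar j) ^ 2 := by
  classical
  have hm : MeasurableSpace.comap a inferInstance ≤ inst := ha_meas.comap_le
  have ha' : ∀ j, Measurable fun ω => a ω j := fun j => (measurable_pi_apply j).comp ha_meas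
  have hb' : ∀ j, Measurable fun ω => b ω j := fun j => (measurable_pi_apply j).comp hb_meas
  have hacm : @Measurable _ _ (MeasurableSpace.comap a inferInstance) _ a :=
    Measurable.of_comap_le le_rfl
  have ha'm : ∀ j, @Measurable _ _ (MeasurableSpace.comap a inferInstance) _
      fun ω => a ω j := fun j => (measurable_pi_apply j).comp hacm
  -- the two contract functions
  have hs1 : Measurable fun ω => ∑ j, a ω j * pstar j :=
    Finset.measurable_sum _ fun j _ => (ha' j).mul_const _
  have hs2 : Measurable fun ω => ∑ j, a ω j * p' j :=
    Finset.measurable_sum _ fun j _ => (ha' j).mul_const _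
  have hs1m : @Measurable _ _ (MeasurableSpace.comap a inferInstance) _
      fun ω => ∑ j, a ω j * pstar j :=
    Finset.measurable_sum _ fun j _ => (ha'm j).mul_const _
  have hs2m : @Measurable _ _ (MeasurableSpace.comap a inferInstance) _
      fun ω => ∑ j, a ω j * p' j :=
    Finset.measurable_sum _ fun j _ => (ha'm j).mul_const _
  have hi1 : Measurable fun ω => (if (∑ j, a ω j * pstar j) < r ω then (1:ℝ) else 0) :=
    Measurable.ite (measurableSet_lt hs1 hr_meas) measurable_const measurable_const
  have hi2 : Measurable fun ω => (if (∑ j, a ω j * p' j) < r ω then (1:ℝ) else 0) :=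
    Measurable.ite (measurableSet_lt hs2 hr_meas) measurable_const measurable_const
  have habs_a : ∀ᵐ ω ∂μ, ∀ j, |a ω j| ≤ abar := by
    filter_upwards [hbdd] with ω ⟨_, h2, _⟩ j
    have hle : (a ω j) ^ 2 ≤ abar ^ 2 :=
      le_trans (Finset.single_le_sum (f := fun j => (a ω j) ^ 2)
        (fun i _ => sq_nonneg _) (Finset.mem_univ j)) h2
    nlinarith [abs_nonneg (a ω j), sq_abs (a ω j), habar.le]
  -- bound on |s2 - s1|
  set C : ℝ := abar * ∑ j, |p' j - pstar j| with hCdef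
  have hC : ∀ᵐ ω ∂μ, |(∑ j, a ω j * p' j) - ∑ j, a ω j * pstar j| ≤ C := by
    filter_upwards [habs_a] with ω ha
    have hdiff : (∑ j, a ω j * p' j) - ∑ j, a ω j * pstar j
        = ∑ j, a ω j * (p' j - pstar j) := by
      rw [← Finset.sum_sub_distrib]
      exact Finset.sum_congr rfl fun j _ => by ring
    rw [hdiff]
    calc |∑ j, a ω j * (p' j - pstar j)| ≤ ∑ j, |a ω j * (p' j - pstar j)| :=
          Finset.abs_sum_le_sum_abs _ _
      _ ≤ ∑ j, abar * |p' j - pstar j| := by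
          refine Finset.sum_le_sum fun j _ => ?_
          rw [abs_mul]
          exact mul_le_mul_of_nonneg_right (ha j) (abs_nonneg _)
      _ = C := by rw [hCdef, Finset.mul_sum]
  -- integrability of the two integrands in the goal
  have hintgd : ∀ (p : Fin m → ℝ), (∀ j, 0 ≤ p j) →
      Integrable (fun ω => r ω * (if (∑ j, a ω j * p j) < r ω then (1:ℝ) else 0) +
        ∑ j, (b ω j - a ω j *
          (if (∑ j', a ω j' * p j') < r ω then (1:ℝ) else 0)) * pstar j) μ := by
    intro p hp
    have hsp : Measurable fun ω => ∑ j, a ω j * p j :=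
      Finset.measurable_sum _ fun j _ => (ha' j).mul_const _
    have hip : Measurable fun ω => (if (∑ j, a ω j * p j) < r ω then (1:ℝ) else 0) :=
      Measurable.ite (measurableSet_lt hsp hr_meas) measurable_const measurable_const
    have hmeas : Measurable (fun ω => r ω * (if (∑ j, a ω j * p j) < r ω then (1:ℝ) else 0) +
        ∑ j, (b ω j - a ω j *
          (if (∑ j', a ω j' * p j') < r ω then (1:ℝ) else 0)) * pstar j) :=
      (hr_meas.mul hip).add (Finset.measurable_sum _ fun j _ =>
        ((hb' j).sub ((ha' j).mul hip)).mul_const _)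
    refine Integrable.mono' (integrable_const (rbar + ∑ j, (bbar + abar) * pstar j))
      hmeas.aestronglyMeasurable ?_
    filter_upwards [hbdd, habs_a] with ω ⟨h1, _, h3⟩ ha
    rw [Real.norm_eq_abs]
    have hib : |(if (∑ j, a ω j * p j) < r ω then (1:ℝ) else 0)| ≤ 1 := by
      split <;> norm_num
    calc |r ω * (if (∑ j, a ω j * p j) < r ω then (1:ℝ) else 0) +
          ∑ j, (b ω j - a ω j *
            (if (∑ j', a ω j' * p j') < r ω then (1:ℝ) else 0)) * pstar j|
        ≤ |r ω * (if (∑ j, a ω j * p j) < r ω then (1:ℝ) else 0)| +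
          |∑ j, (b ω j - a ω j *
            (if (∑ j', a ω j' * p j') < r ω then (1:ℝ) else 0)) * pstar j| := abs_add_le _ _
      _ ≤ rbar + ∑ j, (bbar + abar) * pstar j := by
          gcongr ?_ + ?_
          · rw [abs_mul]
            calc |r ω| * |(if (∑ j, a ω j * p j) < r ω then (1:ℝ) else 0)|
                ≤ rbar * 1 := mul_le_mul h1 hib (abs_nonneg _) ((abs_nonneg _).trans h1)
              _ = rbar := mul_one _
          · calc |∑ j, (b ω j - a ω j *
                  (if (∑ j', a ω j' * p j') < r ω then (1:ℝ) else 0)) * pstar j|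
                ≤ ∑ j, |(b ω j - a ω j *
                  (if (∑ j', a ω j' * p j') < r ω then (1:ℝ) else 0)) * pstar j| :=
                  Finset.abs_sum_le_sum_abs _ _
              _ ≤ ∑ j, (bbar + abar) * pstar j := by
                  refine Finset.sum_le_sum fun j _ => ?_
                  rw [abs_mul, abs_of_nonneg (hps j)]
                  refine mul_le_mul_of_nonneg_right ?_ (hps j)
                  calc |b ω j - a ω j *
                        (if (∑ j', a ω j' * p j') < r ω then (1:ℝ) else 0)|
                      ≤ |b ω j| + |a ω j *
                        (if (∑ j', a ω j' * p j') < r ω then (1:ℝ) else 0)| := abs_sub _ _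
                    _ ≤ bbar + abar := by
                        gcongr ?_ + ?_
                        · exact h3 j
                        · rw [abs_mul]
                          calc |a ω j| * |(if (∑ j', a ω j' * p j') < r ω then (1:ℝ) else 0)|
                              ≤ abar * 1 := mul_le_mul (ha j) hib (abs_nonneg _)
                                ((abs_nonneg _).trans (ha j))
                            _ = abar := mul_one _
  have hint1 := hintgd pstar hps
  have hint2 := hintgd p' hp'
  -- rewrite the LHS as a single integral
  rw [← integral_sub hint1 hint2]
  have hkey : ∀ ω, (r ω * (if (∑ j, a ω j * pstar j) < r ω then (1:ℝ) else 0) +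
        ∑ j, (b ω j - a ω j *
          (if (∑ j', a ω j' * pstar j') < r ω then (1:ℝ) else 0)) * pstar j) -
      (r ω * (if (∑ j, a ω j * p' j) < r ω then (1:ℝ) else 0) +
        ∑ j, (b ω j - a ω j *
          (if (∑ j', a ω j' * p' j') < r ω then (1:ℝ) else 0)) * pstar j)
      = (r ω - ∑ j, a ω j * pstar j) *
        ((if (∑ j, a ω j * pstar j) < r ω then (1:ℝ) else 0) -
          (if (∑ j, a ω j * p' j) < r ω then (1:ℝ) else 0)) := by
    intro ω
    have hsum : ∑ j, (b ω j - a ω j *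
          (if (∑ j', a ω j' * pstar j') < r ω then (1:ℝ) else 0)) * pstar j -
        ∑ j, (b ω j - a ω j *
          (if (∑ j', a ω j' * p' j') < r ω then (1:ℝ) else 0)) * pstar j
        = ((if (∑ j, a ω j * p' j) < r ω then (1:ℝ) else 0) -
            (if (∑ j, a ω j * pstar j) < r ω then (1:ℝ) else 0)) *
          ∑ j, a ω j * pstar j := by
      rw [← Finset.sum_sub_distrib, Finset.mul_sum]
      exact Finset.sum_congr rfl fun j _ => by ring
    linear_combination hsum
  rw [integral_congr_ae (Filter.Eventually.of_forall hkey)]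
  -- apply the core lemma and then Cauchy–Schwarz
  refine le_trans (stmt13_core μ hm r (fun ω => ∑ j, a ω j * pstar j)
    (fun ω => ∑ j, a ω j * p' j) hr_meas hs1 hs2 hs1m hs2m C hC smooth hsm) ?_
  have hCS : ∀ᵐ ω ∂μ, ((∑ j, a ω j * p' j) - ∑ j, a ω j * pstar j) ^ 2
      ≤ abar ^ 2 * ∑ j, (p' j - pstar j) ^ 2 := by
    filter_upwards [hbdd] with ω ⟨_, h2, _⟩
    have hdiff : (∑ j, a ω j * p' j) - ∑ j, a ω j * pstar j
        = ∑ j, a ω j * (p' j - pstar j) := by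
      rw [← Finset.sum_sub_distrib]
      exact Finset.sum_congr rfl fun j _ => by ring
    rw [hdiff]
    have hcs := Finset.sum_mul_sq_le_sq_mul_sq Finset.univ (fun j => a ω j)
      (fun j => p' j - pstar j)
    have hnn : (0:ℝ) ≤ ∑ j, (p' j - pstar j) ^ 2 :=
      Finset.sum_nonneg fun j _ => sq_nonneg _
    nlinarith
  have hsqint : Integrable
      (fun ω => ((∑ j, a ω j * p' j) - ∑ j, a ω j * pstar j) ^ 2) μ := by
    refine Integrable.mono' (integrable_const (abar ^ 2 * ∑ j, (p' j - pstar j) ^ 2))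
      (((hs2.sub hs1).pow_const 2).aestronglyMeasurable) ?_
    filter_upwards [hCS] with ω h
    rw [Real.norm_eq_abs, abs_of_nonneg (sq_nonneg _)]
    exact h
  have hfinal : ∫ ω, ((∑ j, a ω j * p' j) - ∑ j, a ω j * pstar j) ^ 2 ∂μ
      ≤ abar ^ 2 * ∑ j, (p' j - pstar j) ^ 2 := by
    calc ∫ ω, ((∑ j, a ω j * p' j) - ∑ j, a ω j * pstar j) ^ 2 ∂μ
        ≤ ∫ _, (abar ^ 2 * ∑ j, (p' j - pstar j) ^ 2) ∂μ :=
          integral_mono_ae hsqint (integrable_const _) hCS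
      _ = abar ^ 2 * ∑ j, (p' j - pstar j) ^ 2 := by simp
  calc smooth * ∫ ω, ((∑ j, a ω j * p' j) - ∑ j, a ω j * pstar j) ^ 2 ∂μ
      ≤ smooth * (abar ^ 2 * ∑ j, (p' j - pstar j) ^ 2) :=
        mul_le_mul_of_nonneg_left hfinal hsmooth.le
    _ = smooth * abar ^ 2 * ∑ j, (p' j - pstar j) ^ 2 := by ring
end
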